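/- Let (S,∘) be a bijective RC-quasigroup of cardinal n and M its structure monoid. For each subset I of S let Δ_I denote the right-lcm of I in M. Then Δ_I is a product of card(I) generators (its length is card(I)), the map I ↦ Δ_I from subsets of S to M is injective, and the right-lcm Δ of S has exactly 2ⁿ left-divisors in M, namely the elements Δ_I for I ⊆ S. -/

import Mathlib

/-!
A word `w` over `S` carries a vector `J(w) ∈ ℕ^S` and a permutation `Φ(w)` of `S`, defined by
`J(s w) = e_s + J(w) ∘ (s∘-)` and `Φ(s w) = Φ(w) ∘ (s∘-)`, so that `J(uv) = J(u) + J(v) ∘ Φ(u)`.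
Both sides of a relation `s(s∘t) = t(t∘s)` have `J = e_s + e_t`, and the right-cyclic law says
exactly that they have the same `Φ`; hence `J` is defined on the structure monoid `M`.
Conversely `J` determines the element: if `J(w)` is positive at `x`, then `w` can be rewritten to
start with `x`, and induction on the length applies. Since `J` is also onto, left-divisibility in
`M` becomes the product order on `ℕ^S`, the generator `s` becoming `e_s` and length becoming the
sum of coordinates. In `ℕ^S` the lcm of `{e_s | s ∈ I}` is the indicator of `I`, and the vectors
below `(1, …, 1)` are the `2ⁿ` indicators.
-/

/-- The right-cyclic law: `(x∘y)∘(x∘z) = (y∘x)∘(y∘z)`. -/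
def RCLaw {S : Type*} (op : S → S → S) : Prop :=
  ∀ x y z : S, op (op x y) (op x z) = op (op y x) (op y z)

/-- The defining relations `s(s∘t) = t(t∘s)`, `s ≠ t`, of the structure monoid, as a relation
on the free monoid over `S`. -/
def rcRel {S : Type*} (op : S → S → S) : FreeMonoid S → FreeMonoid S → Prop :=
  fun a b => ∃ s t : S, s ≠ t ∧
    a = FreeMonoid.of s * FreeMonoid.of (op s t) ∧ b = FreeMonoid.of t * FreeMonoid.of (op t s)

/-- The structure monoid of `(S,∘)`: the monoid presented by generators `S` and relations
`s(s∘t) = t(t∘s)` for `s ≠ t`, realized as the quotient of the free monoid on `S` by the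
congruence generated by these relations. -/
abbrev StructureMonoid {S : Type*} (op : S → S → S) := (conGen (rcRel op)).Quotient

/-- The canonical generator of the structure monoid associated with `s ∈ S`. -/
def smGen {S : Type*} (op : S → S → S) (s : S) : StructureMonoid op :=
  (conGen (rcRel op)).mk' (FreeMonoid.of s)

open Function

section NatVectors

variable {S : Type*} [DecidableEq S]

lemma single_one_le_iff {f : S → ℕ} {s : S} : Pi.single s 1 ≤ f ↔ 1 ≤ f s := by
  refine ⟨fun h => by simpa using h s, fun h x => ?_⟩
  rcases eq_or_ne x s with rfl | hx
  · simpa using h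
  · simp [hx]

lemma single_comp_of_injective {T α : Type*} [DecidableEq T] [Zero α] {f : T → S}
    (hf : Injective f) (t : T) (a : α) : Pi.single (f t) a ∘ f = Pi.single t a :=
  update_comp_eq_of_injective _ hf _ _

lemma le_one_iff_exists_indicator [Fintype S] {f : S → ℕ} :
    f ≤ 1 ↔ ∃ I : Finset S, (I : Set S).indicator 1 = f := by
  constructor
  · intro hf
    refine ⟨Finset.univ.filter (f · = 1), funext fun x => ?_⟩
    rcases Nat.le_one_iff_eq_zero_or_eq_one.mp (hf x) with hx | hx <;> simp [hx]
  · rintro ⟨I, rfl⟩ x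
    by_cases hx : x ∈ I <;> simp [hx]

lemma apply_lcm_eq_indicator {M : Type*} [Monoid M] {gen : S → M} {J : M → S → ℕ}
    (hJ : Surjective J) (hdvd : ∀ g h, g ∣ h ↔ J g ≤ J h)
    (hgen : ∀ s, J (gen s) = Pi.single s 1) {I : Finset S} {Δ : M}
    (hΔ : (∀ s ∈ I, gen s ∣ Δ) ∧ ∀ k, (∀ s ∈ I, gen s ∣ k) → Δ ∣ k) :
    J Δ = (I : Set S).indicator 1 := by
  have hgen_dvd {s : S} {g : M} : gen s ∣ g ↔ 1 ≤ J g s := by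
    rw [hdvd, hgen, single_one_le_iff]
  refine le_antisymm ?_ fun x => ?_
  · obtain ⟨k, hk⟩ := hJ ((I : Set S).indicator 1)
    rw [← hk, ← hdvd]
    exact hΔ.2 k fun s hs => hgen_dvd.mpr (by simp [hk, hs])
  · by_cases hx : x ∈ I
    · simpa [hx] using hgen_dvd.mp (hΔ.1 x hx)
    · simp [hx]

end NatVectors

namespace StructureMonoid

variable {S : Type*}

section Words

variable (op : S → S → S)

def wordPerm : List S → S → S
  | [] => id
  | s :: w => wordPerm w ∘ op s

lemma wordPerm_append (u v : List S) :
    wordPerm op (u ++ v) = wordPerm op v ∘ wordPerm op u := by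
  induction u with
  | nil => rfl
  | cons s u ih => simp only [List.cons_append, wordPerm, ih]; rfl

def wordProd (l : List S) : StructureMonoid op := (l.map (smGen op)).prod

@[simp] lemma wordProd_cons (s : S) (l : List S) :
    wordProd op (s :: l) = smGen op s * wordProd op l := by
  simp [wordProd]

lemma wordProd_append (u v : List S) : wordProd op (u ++ v) = wordProd op u * wordProd op v := by
  simp [wordProd]

lemma wordProd_eq_mk' (l : List S) :
    wordProd op l = (conGen (rcRel op)).mk' (FreeMonoid.ofList l) := by
  induction l with
  | nil => rfl
  | cons s l ih => rw [wordProd_cons, ih, FreeMonoid.ofList_cons, map_mul]; rfl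

lemma wordProd_surjective : Surjective (wordProd op) := fun g => by
  obtain ⟨f, rfl⟩ := (conGen (rcRel op)).mk'_surjective g
  exact ⟨f.toList, by rw [wordProd_eq_mk', FreeMonoid.ofList_toList]⟩

variable [DecidableEq S]

def wordCocycle : List S → S → ℕ
  | [] => 0
  | s :: w => Pi.single s 1 + wordCocycle w ∘ op s

lemma wordCocycle_append (u v : List S) :
    wordCocycle op (u ++ v) = wordCocycle op u + wordCocycle op v ∘ wordPerm op u := by
  induction u with
  | nil => simp [wordCocycle, wordPerm]
  | cons s u ih => simp only [List.cons_append, wordCocycle, wordPerm, ih, add_assoc]; rfl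

def cocycleCon : Con (FreeMonoid S) where
  toSetoid := Setoid.ker fun a : FreeMonoid S => (wordCocycle op a.toList, wordPerm op a.toList)
  mul' {a b c d} hab hcd := by
    simp only [Setoid.ker_def, Prod.ext_iff, FreeMonoid.toList_mul, wordCocycle_append,
      wordPerm_append] at hab hcd ⊢
    rw [hab.1, hab.2, hcd.1, hcd.2]
    exact ⟨rfl, rfl⟩

end Words

variable {op : S → S → S}

lemma wordPerm_bijective (hlb : ∀ s, Bijective (op s)) (u : List S) :
    Bijective (wordPerm op u) := by
  induction u with
  | nil => exact bijective_id
  | cons s u ih => exact ih.comp (hlb s)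

lemma smGen_mul_smGen {s t : S} (hst : s ≠ t) :
    smGen op s * smGen op (op s t) = smGen op t * smGen op (op t s) :=
  (conGen (rcRel op)).eq.mpr (ConGen.Rel.of _ _ ⟨s, t, hst, rfl, rfl⟩)

variable [DecidableEq S]

lemma wordCocycle_pair {s : S} (hs : Injective (op s)) (t : S) :
    wordCocycle op [s, op s t] = Pi.single s 1 + Pi.single t 1 := by
  simp only [wordCocycle, Pi.zero_comp, add_zero, single_comp_of_injective hs]

lemma conGen_le_cocycleCon (hRC : RCLaw op) (hlb : ∀ s, Bijective (op s)) :
    conGen (rcRel op) ≤ cocycleCon op := by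
  rw [Con.conGen_le]
  rintro _ _ ⟨s, t, -, rfl, rfl⟩
  refine Prod.ext ?_ (funext (hRC s t))
  change wordCocycle op [s, op s t] = wordCocycle op [t, op t s]
  rw [wordCocycle_pair (hlb s).1, wordCocycle_pair (hlb t).1, add_comm]

lemma wordCocycle_eq_of_wordProd_eq (hRC : RCLaw op) (hlb : ∀ s, Bijective (op s))
    {u v : List S} (h : wordProd op u = wordProd op v) :
    wordCocycle op u = wordCocycle op v := by
  rw [wordProd_eq_mk', wordProd_eq_mk'] at h
  simpa using congrArg Prod.fst (conGen_le_cocycleCon hRC hlb ((conGen (rcRel op)).eq.mp h))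

lemma exists_wordProd_eq_smGen_mul {l : List S} {x : S} (h : wordCocycle op l x ≠ 0) :
    ∃ w, wordProd op l = smGen op x * wordProd op w := by
  induction l generalizing x with
  | nil => exact absurd rfl h
  | cons s u ih =>
    rcases eq_or_ne x s with rfl | hx
    · exact ⟨u, wordProd_cons op x u⟩
    · obtain ⟨w, hw⟩ := ih (x := op s x) (by simpa [wordCocycle, hx] using h)
      refine ⟨op x s :: w, ?_⟩
      rw [wordProd_cons, hw, ← mul_assoc, smGen_mul_smGen hx.symm, mul_assoc, wordProd_cons]

lemma wordCocycle_cons_cancel {s : S} (hs : Surjective (op s)) {u v : List S}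
    (h : wordCocycle op (s :: u) = wordCocycle op (s :: v)) :
    wordCocycle op u = wordCocycle op v := by
  funext y
  obtain ⟨x, rfl⟩ := hs y
  simpa [wordCocycle] using congrFun h x

section Fintype

variable [Fintype S]

lemma sum_wordCocycle (hlb : ∀ s, Bijective (op s)) (l : List S) :
    ∑ x, wordCocycle op l x = l.length := by
  induction l with
  | nil => simp [wordCocycle]
  | cons s w ih =>
    simp only [wordCocycle, Pi.add_apply, comp_apply, Finset.sum_add_distrib,
      Fintype.sum_pi_single', Fintype.sum_bijective (op s) (hlb s) _ _ fun _ => rfl, ih,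
      List.length_cons]
    omega

lemma length_eq_of_wordCocycle_eq (hlb : ∀ s, Bijective (op s)) {u v : List S}
    (h : wordCocycle op u = wordCocycle op v) : u.length = v.length := by
  rw [← sum_wordCocycle hlb, ← sum_wordCocycle hlb, h]

lemma exists_wordCocycle_eq (hlb : ∀ s, Bijective (op s)) (a : S → ℕ) :
    ∃ l, wordCocycle op l = a := by
  induction h : ∑ x, a x generalizing a with
  | zero => exact ⟨[], funext fun x => (Finset.sum_eq_zero_iff.mp h x (Finset.mem_univ x)).symm⟩
  | succ N ih =>
    obtain ⟨s, hs⟩ : ∃ s, a s ≠ 0 := by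
      by_contra! h0
      simp [h0] at h
    have hle : Pi.single s 1 ≤ a := single_one_le_iff.mpr (Nat.one_le_iff_ne_zero.mpr hs)
    let e := Equiv.ofBijective (op s) (hlb s)
    obtain ⟨w, hw⟩ := ih ((a - Pi.single s 1) ∘ e.symm) <| by
      simp only [comp_apply]
      rw [e.symm.sum_comp (a - Pi.single s 1)]
      simp only [Pi.sub_apply]
      rw [Finset.sum_tsub_distrib _ fun x _ => hle x,
        Fintype.sum_pi_single', h, Nat.add_sub_cancel]
    refine ⟨s :: w, ?_⟩
    change Pi.single s 1 + wordCocycle op w ∘ e = a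
    rw [hw, comp_assoc, e.symm_comp_self, comp_id, add_tsub_cancel_of_le hle]

theorem wordProd_eq_of_wordCocycle_eq (hRC : RCLaw op) (hlb : ∀ s, Bijective (op s))
    {u v : List S} (h : wordCocycle op u = wordCocycle op v) : wordProd op u = wordProd op v := by
  induction hn : u.length generalizing u v with
  | zero =>
    rw [List.length_eq_zero_iff.mp hn, List.length_eq_zero_iff.mp
      ((length_eq_of_wordCocycle_eq hlb h).symm.trans hn)]
  | succ n ih =>
    obtain ⟨s, u', rfl⟩ := List.exists_cons_of_length_eq_add_one hn
    obtain ⟨t, v', rfl⟩ :=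
      List.exists_cons_of_length_eq_add_one ((length_eq_of_wordCocycle_eq hlb h).symm.trans hn)
    rcases eq_or_ne s t with rfl | hst
    · rw [wordProd_cons, wordProd_cons,
        ih (wordCocycle_cons_cancel (hlb s).2 h) (Nat.succ_injective hn)]
    -- `t` heads `v`, so it also heads `u`: rewrite `u` to start with `t` and cancel.
    have hut : wordCocycle op u' (op s t) ≠ 0 := by
      have := congrFun h t
      simp only [wordCocycle, Pi.add_apply, comp_apply, Pi.single_eq_same,
        Pi.single_eq_of_ne' hst] at this
      omega
    obtain ⟨w, hw⟩ := exists_wordProd_eq_smGen_mul hut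
    have hu : wordProd op (s :: u') = wordProd op (t :: op t s :: w) := by
      rw [wordProd_cons, hw, ← mul_assoc, smGen_mul_smGen hst, mul_assoc, wordProd_cons,
        wordProd_cons]
    have hJ : wordCocycle op (op t s :: w) = wordCocycle op v' :=
      wordCocycle_cons_cancel (hlb t).2 ((wordCocycle_eq_of_wordProd_eq hRC hlb hu).symm.trans h)
    rw [hu, wordProd_cons op t, wordProd_cons op t, ih hJ (by
      rw [length_eq_of_wordCocycle_eq hlb hJ]
      exact Nat.succ_injective ((length_eq_of_wordCocycle_eq hlb h).symm.trans hn))]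

theorem wordProd_eq_wordProd_iff (hRC : RCLaw op) (hlb : ∀ s, Bijective (op s))
    {u v : List S} : wordProd op u = wordProd op v ↔ wordCocycle op u = wordCocycle op v :=
  ⟨wordCocycle_eq_of_wordProd_eq hRC hlb, wordProd_eq_of_wordCocycle_eq hRC hlb⟩

theorem wordProd_dvd_wordProd_iff (hRC : RCLaw op) (hlb : ∀ s, Bijective (op s))
    {u v : List S} : wordProd op u ∣ wordProd op v ↔ wordCocycle op u ≤ wordCocycle op v := by
  constructor
  · rintro ⟨g, hg⟩
    obtain ⟨w, rfl⟩ := wordProd_surjective op g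
    rw [← wordProd_append, wordProd_eq_wordProd_iff hRC hlb, wordCocycle_append] at hg
    exact hg ▸ le_self_add
  · intro h
    let e := Equiv.ofBijective _ (wordPerm_bijective hlb u)
    obtain ⟨w, hw⟩ := exists_wordCocycle_eq hlb ((wordCocycle op v - wordCocycle op u) ∘ e.symm)
    refine ⟨wordProd op w, ?_⟩
    rw [← wordProd_append, wordProd_eq_wordProd_iff hRC hlb, wordCocycle_append]
    change _ = _ + _ ∘ e
    rw [hw, comp_assoc, e.symm_comp_self, comp_id, add_tsub_cancel_of_le h]

theorem exists_cocycle (hRC : RCLaw op) (hlb : ∀ s, Bijective (op s)) :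
    ∃ J : StructureMonoid op → S → ℕ, Bijective J ∧ (∀ g h, g ∣ h ↔ J g ≤ J h) ∧
      (∀ s, J (smGen op s) = Pi.single s 1) ∧ ∀ l, ∑ x, J (wordProd op l) x = l.length := by
  set word := surjInv (wordProd_surjective op)
  have hJ (l : List S) : wordCocycle op (word (wordProd op l)) = wordCocycle op l :=
    (wordProd_eq_wordProd_iff hRC hlb).mp (surjInv_eq _ _)
  refine ⟨wordCocycle op ∘ word, ⟨fun g h hgh => ?_, fun a => ?_⟩, fun g h => ?_, fun s => ?_,
    fun l => ?_⟩
  · obtain ⟨u, rfl⟩ := wordProd_surjective op g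
    obtain ⟨v, rfl⟩ := wordProd_surjective op h
    simp only [comp_apply, hJ] at hgh
    exact (wordProd_eq_wordProd_iff hRC hlb).mpr hgh
  · obtain ⟨l, rfl⟩ := exists_wordCocycle_eq hlb a
    exact ⟨wordProd op l, hJ l⟩
  · obtain ⟨u, rfl⟩ := wordProd_surjective op g
    obtain ⟨v, rfl⟩ := wordProd_surjective op h
    simp only [comp_apply, hJ]
    exact wordProd_dvd_wordProd_iff hRC hlb
  · have hs : smGen op s = wordProd op [s] := by simp [wordProd]
    rw [hs, comp_apply, hJ]
    simp [wordCocycle]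
  · simp only [comp_apply, hJ, sum_wordCocycle hlb]

end Fintype

end StructureMonoid

theorem statement10_general {S : Type*} [Fintype S] {n : ℕ} (hcard : Fintype.card S = n)
    (op : S → S → S)
    (hRC : RCLaw op) (hlb : ∀ s : S, Function.Bijective (op s))
    (D : Finset S → StructureMonoid op)
    (hD : ∀ I : Finset S,
      (∀ s ∈ I, smGen op s ∣ D I) ∧ ∀ k, (∀ s ∈ I, smGen op s ∣ k) → D I ∣ k) :
    (∀ I : Finset S, ∃ l : List S, l.length = I.card ∧ D I = (l.map (smGen op)).prod) ∧
    Function.Injective D ∧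
    (∀ g : StructureMonoid op, g ∣ D Finset.univ ↔ ∃ I : Finset S, D I = g) ∧
    Nat.card {g : StructureMonoid op // g ∣ D Finset.univ} = 2 ^ n := by
  classical
  obtain ⟨J, hJ, hdvd, hgen, hlen⟩ := StructureMonoid.exists_cocycle hRC hlb
  have hJD (I : Finset S) : J (D I) = (I : Set S).indicator 1 :=
    apply_lcm_eq_indicator hJ.2 hdvd hgen (hD I)
  have hDinj : Injective D := fun I I' h =>
    Finset.coe_injective (Set.indicator_one_inj ℕ (by rw [← hJD, ← hJD, h]))
  have hdivisors (g : StructureMonoid op) : g ∣ D Finset.univ ↔ ∃ I, D I = g := by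
    rw [hdvd, hJD, Finset.coe_univ, Set.indicator_univ, le_one_iff_exists_indicator]
    simp only [← hJD, hJ.1.eq_iff]
  refine ⟨fun I => ?_, hDinj, hdivisors, ?_⟩
  · obtain ⟨l, hl⟩ := StructureMonoid.wordProd_surjective op (D I)
    refine ⟨l, ?_, hl.symm⟩
    rw [← hlen, hl, hJD]
    simp [Set.indicator_apply]
  · calc Nat.card {g // g ∣ D Finset.univ} = Nat.card (Set.range D) := by
          simp_rw [hdivisors]; rfl
      _ = 2 ^ n := by
          rw [Nat.card_range_of_injective hDinj, Nat.card_eq_fintype_card, Fintype.card_finset,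
            hcard]

/-- Let `(S,∘)` be a bijective RC-quasigroup of cardinal `n`, `M` its
structure monoid, and for `I ⊆ S` let `Δ_I` be the right-lcm of `I` in `M`. Then `Δ_I` is a
product of `card I` generators, the map `I ↦ Δ_I` is injective, the left-divisors of `Δ_S`
are exactly the elements `Δ_I`, and `Δ_S` has exactly `2ⁿ` left-divisors. -/
theorem statement10 {S : Type*} [Fintype S] {n : ℕ} (hcard : Fintype.card S = n)
    (op : S → S → S)
    (hRC : RCLaw op) (hlb : ∀ s : S, Function.Bijective (op s))
    (hbij : Function.Bijective (fun p : S × S => (op p.1 p.2, op p.2 p.1)))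
    (D : Finset S → StructureMonoid op)
    (hD : ∀ I : Finset S,
      (∀ s ∈ I, smGen op s ∣ D I) ∧ ∀ k, (∀ s ∈ I, smGen op s ∣ k) → D I ∣ k) :
    (∀ I : Finset S, ∃ l : List S, l.length = I.card ∧ D I = (l.map (smGen op)).prod) ∧
    Function.Injective D ∧
    (∀ g : StructureMonoid op, g ∣ D Finset.univ ↔ ∃ I : Finset S, D I = g) ∧
    Nat.card {g : StructureMonoid op // g ∣ D Finset.univ} = 2 ^ n :=
  statement10_general hcard op hRC hlb D hD
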